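/- arXiv:0907.0044 — 2 statements merged into one kernel-verified Lean document; each statement's English description precedes it below -/
import Mathlib

section
/- For any integer ℓ ≥ 2, the identity Σ_{r=0}^{ℓ} Σ_{j=0}^{r} (−1)^{j+r} C(r−2, j) · h_{ℓ−r} · g_{1^{r−j}} = 0 holds in the ring of symmetric functions, where g_{1^m} = Σ_{t=1}^{m} binom(m−1, t−1) e_t for m ≥ 1, g_{1^0} = 1, h_0 = 1, and C(n, j) = n(n−1)⋯(n−j+1)/j! denotes the generalized binomial coefficient for a (possibly negative) integer n. -/
open scoped Classical

namespace AffineKTheory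

noncomputable instance : Nonempty YoungDiagram := ⟨⊥⟩
/-! ## The ring of symmetric functions, realized as `Λ ≅ ℤ[h₁, h₂, …]`,
the free polynomial ring on the complete homogeneous symmetric functions
(variable `n` is `h_{n+1}`). -/

abbrev SymFunc := MvPolynomial ℕ ℤ

/-- The complete homogeneous symmetric function `h_r` (`h_0 = 1`). -/
noncomputable def hSym : ℕ → SymFunc
  | 0 => 1
  | n + 1 => MvPolynomial.X n

/-- The elementary symmetric function
`e_n = Σ_{α ⊨ n} (-1)^{n - ℓ(α)} h_α` (sum over compositions of `n`). -/
noncomputable def eSym (n : ℕ) : SymFunc :=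
  ∑ c : Composition n, (-1 : SymFunc) ^ (n - c.length) * (c.blocks.map hSym).prod

/-- `h_λ = h_{λ_1} ⋯ h_{λ_ℓ}` for a partition `λ`. -/
noncomputable def hProd (lam : YoungDiagram) : SymFunc :=
  (lam.rowLens.map hSym).prod

/-- `Λ^{(k)} = ℤ[h_1, …, h_k]` as a subalgebra of `Λ`. -/
noncomputable def LambdaK (k : ℕ) : Subalgebra ℤ SymFunc :=
  MvPolynomial.supported ℤ {n : ℕ | n < k}

/-- The exponent vector of the monomial `h_λ` in the `h`-presentation of `Λ`. -/
noncomputable def hExp (lam : YoungDiagram) : ℕ →₀ ℕ :=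
  Multiset.toFinsupp ((lam.rowLens : Multiset ℕ).map fun r => r - 1)

/-- The coefficient of `h_λ` in the expansion of `p ∈ Λ` in the basis `{h_λ}`. -/
noncomputable def hCoeff (p : SymFunc) (lam : YoungDiagram) : ℤ :=
  MvPolynomial.coeff (hExp lam) p

/-- The Hall inner product `⟨p, F⟩` of `p ∈ Λ` with a (degree-wise finite) formal series
`F = Σ_ν F(ν) m_ν` in the monomial symmetric functions, characterized by
`⟨h_λ, m_μ⟩ = δ_{λμ}`. -/
noncomputable def hallPair (p : SymFunc) (F : YoungDiagram → ℤ) : ℤ :=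
  ∑ᶠ ν : YoungDiagram, hCoeff p ν * F ν

/-- The column dual Grothendieck polynomial `g_{1^m} = Σ_{j=1}^m binom(m-1, j-1) e_j`
(`g_{1^0} = 1`). -/
noncomputable def gColumn (m : ℕ) : SymFunc :=
  if m = 0 then 1 else ∑ j ∈ Finset.Icc 1 m, (((m - 1).choose (j - 1) : ℤ)) • eSym j

/-- The algebra endomorphism `Ω` of `Λ` with `Ω(h_ℓ) = Σ_{j=1}^ℓ binom(ℓ-1, j-1) e_j`. -/
noncomputable def OmegaMap : SymFunc →ₐ[ℤ] SymFunc :=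
  MvPolynomial.aeval fun n => gColumn (n + 1)

/-- Generalized binomial coefficient `C(n, j)` for an arbitrary integer `n`. -/
def genBinom (n : ℤ) (j : ℕ) : ℤ :=
  if 0 ≤ n then (n.toNat.choose j : ℤ) else (-1) ^ j * ((j + (-n - 1).toNat).choose j : ℤ)

end AffineKTheory

/-! Write `E_r = (-1)^r e_r`. Peeling off the first block of a composition in
`E_n = Σ_α Π_i (-h_{α_i})` gives Newton's identity `Σ_r h_{n-r} E_r = 0` for `n ≥ 1`.
The ℤ-linear map `x^s ↦ e_{s+1}` sends `(x+1)^{m-1}` to `g_{1^m}`, so for `r = a + 2` the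
coefficient of `h_{ℓ-r}` in the sum is the image of
`Σ_j (-1)^{j+a} C(a,j) (x+1)^{a+1-j} = (x+1)(-x)^a`, that is `E_r - E_{r-1}`; the same holds
for `r = 1`, while for `r = 0` the coefficient is `E_0`. Hence the sum telescopes to the
difference of Newton's identities in degrees `ℓ` and `ℓ - 1`, both of which vanish as `ℓ ≥ 2`. -/

open Finset

namespace Composition

def blocksFinset (n : ℕ) : Finset (List ℕ) :=
  (univ : Finset (Composition n)).map ⟨blocks, fun _ _ => Composition.ext⟩

theorem mem_blocksFinset {n : ℕ} {l : List ℕ} :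
    l ∈ blocksFinset n ↔ (∀ i ∈ l, 0 < i) ∧ l.sum = n := by
  simp only [blocksFinset, mem_map, mem_univ, true_and]
  constructor
  · rintro ⟨c, rfl⟩
    exact ⟨fun _ => c.blocks_pos, c.blocks_sum⟩
  · rintro ⟨hpos, hsum⟩
    exact ⟨⟨l, hpos _, hsum⟩, rfl⟩

theorem blocksFinset_succ (n : ℕ) :
    blocksFinset (n + 1) = (antidiagonal n).biUnion fun p =>
      (blocksFinset p.2).map ⟨List.cons (p.1 + 1), List.cons_injective⟩ := by
  ext l
  simp only [mem_blocksFinset, mem_biUnion, mem_map, HasAntidiagonal.mem_antidiagonal,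
    Function.Embedding.coeFn_mk]
  constructor
  · rintro ⟨hpos, hsum⟩
    obtain _ | ⟨a, t⟩ := l
    · simp at hsum
    · have ha := hpos a List.mem_cons_self
      refine ⟨(a - 1, t.sum), ?_, t, ⟨fun i hi => hpos i (List.mem_cons_of_mem a hi), rfl⟩, ?_⟩
      · simp only [List.sum_cons] at hsum
        omega
      · simp only [List.cons.injEq, and_true]
        omega
  · rintro ⟨⟨a, b⟩, hab, t, ⟨hpos, rfl⟩, rfl⟩
    refine ⟨?_, by simp only [List.sum_cons]; omega⟩
    simp only [List.mem_cons, forall_eq_or_imp]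
    exact ⟨a.succ_pos, hpos⟩

theorem sum_prod_map_blocks_succ {R : Type*} [Semiring R] (g : ℕ → R) (n : ℕ) :
    ∑ c : Composition (n + 1), (c.blocks.map g).prod =
      ∑ p ∈ antidiagonal n, g (p.1 + 1) * ∑ c : Composition p.2, (c.blocks.map g).prod := by
  have hsum (m : ℕ) : ∑ c : Composition m, (c.blocks.map g).prod =
      ∑ l ∈ blocksFinset m, (l.map g).prod := by
    rw [blocksFinset, sum_map]
    rfl
  simp only [hsum, blocksFinset_succ, mul_sum]
  rw [sum_biUnion]
  · simp [sum_map]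
  · intro p hp q hq hpq
    simp only [Function.onFun, disjoint_left, mem_map, Function.Embedding.coeFn_mk]
    rintro _ ⟨t, -, rfl⟩ ⟨t', -, h⟩
    rw [mem_coe, HasAntidiagonal.mem_antidiagonal] at hp hq
    have := (List.cons_eq_cons.1 h).1
    exact hpq (Prod.ext (by omega) (by omega))

end Composition

theorem sum_neg_one_pow_mul_choose_mul_add_one_pow {R : Type*} [CommRing R] (x : R) (a : ℕ) :
    ∑ j ∈ range (a + 1), (-1) ^ (j + a) * (a.choose j : R) * (x + 1) ^ (a + 1 - j) =
      (x + 1) * (-x) ^ a := by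
  have h := sub_pow 1 (x + 1) a
  rw [show (1 : R) - (x + 1) = -x by ring] at h
  rw [h, mul_sum]
  refine sum_congr rfl fun j hj => ?_
  rw [Nat.sub_add_comm (Nat.lt_succ_iff.1 (mem_range.1 hj)), pow_succ]
  ring

namespace AffineKTheory

open Polynomial

theorem neg_one_pow_smul_eSym (n : ℕ) :
    (-1 : ℤ) ^ n • eSym n = ∑ c : Composition n, (c.blocks.map fun b => -hSym b).prod := by
  rw [eSym, smul_sum]
  refine sum_congr rfl fun c _ => ?_
  have hsign : (-1 : SymFunc) ^ n * (-1) ^ (n - c.length) = (-1) ^ c.length := by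
    rw [← pow_sub_mul_pow (-1 : SymFunc) c.length_le, mul_right_comm, ← pow_add,
      Even.neg_one_pow ⟨_, rfl⟩, one_mul]
  rw [show (fun b => -hSym b) = Neg.neg ∘ hSym from rfl, ← List.map_map, List.prod_map_neg,
    List.length_map, zsmul_eq_mul, ← mul_assoc, Int.cast_pow, Int.cast_neg, Int.cast_one, hsign]

theorem eSym_zero : eSym 0 = 1 := by
  have hnil (c : Composition 0) : c.blocks = [] :=
    List.eq_nil_of_length_eq_zero (Nat.le_zero.1 c.length_le)
  have : Subsingleton (Composition 0) := ⟨fun c d => Composition.ext (by rw [hnil c, hnil d])⟩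
  rw [eSym, Fintype.sum_subsingleton _ (Composition.ones 0), hnil]
  simp

theorem sum_antidiagonal_hSym_mul_neg_one_pow_smul_eSym {n : ℕ} (hn : n ≠ 0) :
    ∑ p ∈ antidiagonal n, hSym p.1 * ((-1 : ℤ) ^ p.2 • eSym p.2) = 0 := by
  obtain ⟨m, rfl⟩ := Nat.exists_eq_succ_of_ne_zero hn
  simp only [neg_one_pow_smul_eSym]
  rw [Nat.sum_antidiagonal_succ, Composition.sum_prod_map_blocks_succ]
  simp only [hSym, one_mul, neg_mul, sum_neg_distrib, neg_add_cancel]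

theorem sum_range_hSym_mul_neg_one_pow_smul_eSym {n : ℕ} (hn : n ≠ 0) :
    ∑ r ∈ range (n + 1), hSym (n - r) * ((-1 : ℤ) ^ r • eSym r) = 0 := by
  rw [← sum_antidiagonal_hSym_mul_neg_one_pow_smul_eSym hn, ← Nat.sum_antidiagonal_swap]
  exact (Nat.sum_antidiagonal_eq_sum_range_succ
    (fun a b => hSym b * ((-1 : ℤ) ^ a • eSym a)) n).symm

noncomputable def polyToESymSucc : ℤ[X] →ₗ[ℤ] SymFunc :=
  lsum fun s => LinearMap.toSpanSingleton ℤ SymFunc (eSym (s + 1))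

theorem polyToESymSucc_X_pow (s : ℕ) : polyToESymSucc (X ^ s) = eSym (s + 1) := by
  rw [polyToESymSucc, lsum_apply, ← monomial_one_right_eq_X_pow, sum_monomial_index] <;> simp

theorem gColumn_succ (m : ℕ) : gColumn (m + 1) = polyToESymSucc ((X + 1) ^ m) := by
  rw [gColumn, if_neg m.succ_ne_zero, add_pow, map_sum, ← Ico_add_one_right_eq_Icc,
    sum_Ico_eq_sum_range]
  simp only [one_pow, mul_one, Nat.add_sub_cancel]
  refine sum_congr rfl fun i _ => ?_
  rw [← nsmul_eq_mul', map_nsmul, polyToESymSucc_X_pow, add_comm 1 i, Nat.add_sub_cancel,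
    natCast_zsmul]

theorem genBinom_natCast (a j : ℕ) : genBinom a j = a.choose j := by
  simp [genBinom]

noncomputable def kNewtonCoeff (r : ℕ) : SymFunc :=
  ∑ j ∈ range (r + 1), ((-1 : ℤ) ^ (j + r) * genBinom ((r : ℤ) - 2) j) • gColumn (r - j)

theorem kNewtonCoeff_zero : kNewtonCoeff 0 = 1 := by
  simp [kNewtonCoeff, genBinom, gColumn]

theorem kNewtonCoeff_one : kNewtonCoeff 1 = -eSym 1 - eSym 0 := by
  simp [kNewtonCoeff, sum_range_succ, genBinom, gColumn, eSym_zero, sub_eq_add_neg]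

theorem kNewtonCoeff_add_two (a : ℕ) :
    kNewtonCoeff (a + 2) = (-1 : ℤ) ^ a • (eSym (a + 1) + eSym (a + 2)) := by
  have hbinom (j : ℕ) : genBinom (((a + 2 : ℕ) : ℤ) - 2) j = a.choose j := by
    rw [← genBinom_natCast]
    push_cast
    ring_nf
  have hpoly : ∑ j ∈ range (a + 1),
      ((-1 : ℤ) ^ (j + (a + 2)) * a.choose j) • (X + 1 : ℤ[X]) ^ (a + 1 - j) =
        (-1 : ℤ) ^ a • (X ^ a + X ^ (a + 1)) := by
    have hsign (j : ℕ) : (-1 : ℤ[X]) ^ (j + (a + 2)) = (-1) ^ (j + a) := by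
      rw [← add_assoc, pow_add, neg_one_sq, mul_one]
    simp only [zsmul_eq_mul]
    push_cast
    simp only [hsign]
    rw [sum_neg_one_pow_mul_choose_mul_add_one_pow, neg_pow]
    ring
  rw [kNewtonCoeff, sum_range_succ, sum_range_succ, hbinom, hbinom, Nat.choose_succ_self,
    Nat.choose_eq_zero_of_lt (by omega : a < a + 2)]
  simp only [Nat.cast_zero, mul_zero, zero_smul, add_zero, hbinom]
  calc _ = polyToESymSucc (∑ j ∈ range (a + 1),
        ((-1 : ℤ) ^ (j + (a + 2)) * a.choose j) • (X + 1 : ℤ[X]) ^ (a + 1 - j)) := by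
        rw [map_sum]
        refine sum_congr rfl fun j hj => ?_
        rw [map_zsmul, ← gColumn_succ]
        have := mem_range.1 hj
        congr 2
        omega
    _ = _ := by rw [hpoly, map_zsmul, map_add, polyToESymSucc_X_pow, polyToESymSucc_X_pow]

theorem kNewtonCoeff_succ (i : ℕ) :
    kNewtonCoeff (i + 1) = (-1 : ℤ) ^ (i + 1) • eSym (i + 1) - (-1 : ℤ) ^ i • eSym i := by
  rcases i with _ | a
  · simp [kNewtonCoeff_one, eSym_zero]
  · rw [kNewtonCoeff_add_two, pow_succ, pow_succ]
    simp only [smul_add, mul_neg_one, neg_neg, neg_smul, sub_neg_eq_add]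
    abel

/-- For any integer `ℓ ≥ 2`, the identity
`Σ_{r=0}^{ℓ} Σ_{j=0}^{r} (-1)^{j+r} C(r-2, j) · h_{ℓ-r} · g_{1^{r-j}} = 0`
holds in the ring of symmetric functions, where `g_{1^m} = Σ_{t=1}^m binom(m-1, t-1) e_t`,
`g_{1^0} = 1`, `h_0 = 1`, and `C(n, j)` is the generalized binomial coefficient for a
(possibly negative) integer `n`. -/
theorem kNewton_identity (ℓ : ℕ) (hℓ : 2 ≤ ℓ) :
    ∑ r ∈ Finset.range (ℓ + 1), ∑ j ∈ Finset.range (r + 1),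
      ((-1 : ℤ) ^ (j + r) * genBinom ((r : ℤ) - 2) j) • (hSym (ℓ - r) * gColumn (r - j))
      = 0 := by
  obtain ⟨m, rfl⟩ := Nat.exists_eq_add_of_le' hℓ
  have hNewton := sum_range_hSym_mul_neg_one_pow_smul_eSym (n := m + 2) (by omega)
  have hNewton' := sum_range_hSym_mul_neg_one_pow_smul_eSym (n := m + 1) (by omega)
  rw [sum_range_succ', pow_zero, one_smul, eSym_zero] at hNewton
  simp only [← mul_smul_comm, ← mul_sum, ← kNewtonCoeff.eq_1]
  rw [sum_range_succ', kNewtonCoeff_zero]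
  have hshift (x : ℕ) : m + 2 - (x + 1) = m + 1 - x := by omega
  simp only [kNewtonCoeff_succ, mul_sub, sum_sub_distrib, hshift] at hNewton ⊢
  linear_combination hNewton - hNewton'

end AffineKTheory
end

section
/- For any affine set-valued r-strip (γ/β, ρ), the residue sets Res(γ/β) and Res(β/ρ) are disjoint; consequently the cells of γ/ρ occupy exactly r distinct residues. -/
open scoped Classical

namespace AffineKTheory

/-! ## Cells, hooks, cores, residues -/

/-- Hook length of the cell `(r, c)` in the diagram `γ`. -/
def hookLen (γ : YoungDiagram) (r c : ℕ) : ℕ :=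
  (γ.rowLen r - c) + (γ.colLen c - r) - 1

/-- A `p`-core: a diagram none of whose cells has hook length `p`. -/
def IsCore (p : ℕ) (γ : YoungDiagram) : Prop :=
  ∀ c : ℕ × ℕ, c ∈ γ → hookLen γ c.1 c.2 ≠ p

/-- The `(k+1)`-residue of a cell.  (Rows of the Ferrers shape are indexed so that the cell
directly above `(r, c)` -- in the Ferrers sense of the next, shorter, row -- is `(r+1, c)`.) -/
def residue (k : ℕ) (c : ℕ × ℕ) : ZMod (k + 1) :=
  (c.2 : ZMod (k + 1)) - (c.1 : ZMod (k + 1))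

/-- A removable corner of `γ`: a cell of `γ` with no cell above it nor to its right. -/
def Removable (γ : YoungDiagram) (c : ℕ × ℕ) : Prop :=
  c ∈ γ ∧ (c.1 + 1, c.2) ∉ γ ∧ (c.1, c.2 + 1) ∉ γ

/-- An addable corner of `γ`: a cell outside `γ` whose addition again yields a partition shape. -/
def Addable (γ : YoungDiagram) (c : ℕ × ℕ) : Prop :=
  c ∉ γ ∧ ∀ d : ℕ × ℕ, d ≤ c → d ≠ c → d ∈ γ

/-- A cell is `γ`-blocked if it lies below a cell of `γ`. -/
def Blocked (γ : YoungDiagram) (c : ℕ × ℕ) : Prop :=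
  (c.1 + 1, c.2) ∈ γ

/-- The number of cells of `γ` in row `i` whose hook length is at most `k`:
the `i`-th part of `𝔭(γ)`. -/
noncomputable def pRow (k : ℕ) (γ : YoungDiagram) (i : ℕ) : ℕ :=
  (γ.cells.filter (fun c => c.1 = i ∧ hookLen γ c.1 c.2 ≤ k)).card

/-- The number of cells of `γ` with `k`-bounded hook length, i.e. `|𝔭(γ)|`. -/
noncomputable def pSize (k : ℕ) (γ : YoungDiagram) : ℕ :=
  (γ.cells.filter (fun c => hookLen γ c.1 c.2 ≤ k)).card

/-- A `k`-bounded partition: all parts at most `k`. -/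
def IsKBounded (k : ℕ) (lam : YoungDiagram) : Prop :=
  ∀ i, lam.rowLen i ≤ k

/-- `𝔭(γ)`: the `k`-bounded partition obtained from a `(k+1)`-core `γ` by deleting every cell of
hook length greater than `k` and reading off row lengths. -/
noncomputable def pPart (k : ℕ) (γ : YoungDiagram) : YoungDiagram :=
  Classical.epsilon fun lam => ∀ i, lam.rowLen i = pRow k γ i

/-- `𝔠(λ)`: the unique `(k+1)`-core corresponding to the `k`-bounded partition `λ` under the
bijection `𝔭`. -/
noncomputable def coreOf (k : ℕ) (lam : YoungDiagram) : YoungDiagram :=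
  Classical.epsilon fun γ => IsCore (k + 1) γ ∧ ∀ i, pRow k γ i = lam.rowLen i

/-- The `k`-conjugate `λ^{ω_k} = 𝔭(𝔠(λ)')` of a `k`-bounded partition. -/
noncomputable def kConj (k : ℕ) (lam : YoungDiagram) : YoungDiagram :=
  pPart k ((coreOf k lam).transpose)

/-- A `k`-bounded composition: a list of parts, each between `1` and `k`. -/
def IsKBoundedComp (k : ℕ) (α : List ℕ) : Prop :=
  ∀ a ∈ α, 1 ≤ a ∧ a ≤ k

/-- Dominance order on partitions. -/
def Dominates (mu lam : YoungDiagram) : Prop :=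
  mu.card = lam.card ∧
    ∀ n : ℕ, ∑ i ∈ Finset.range n, lam.rowLen i ≤ ∑ i ∈ Finset.range n, mu.rowLen i


/-! ## Strips -/

/-- `γ/β` is a horizontal strip: `β ⊆ γ` with at most one cell of `γ/β` in each column. -/
def IsHorizontalStrip (β γ : YoungDiagram) : Prop :=
  β ≤ γ ∧ ∀ c d : ℕ × ℕ, c ∈ γ → c ∉ β → d ∈ γ → d ∉ β → c.2 = d.2 → c = d

/-- `Res(γ/β)`: the set of residues of the cells of `γ/β`. -/
noncomputable def resSet (k : ℕ) (β γ : YoungDiagram) : Finset (ZMod (k + 1)) :=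
  (γ.cells \ β.cells).image (residue k)

/-- An affine `r`-strip `γ/β` (for `0 ≤ r ≤ k`): a horizontal strip of `(k+1)`-cores with
`|𝔭(γ)| = |𝔭(β)| + r` occupying exactly `r` distinct residues. -/
def IsAffineStrip (k r : ℕ) (β γ : YoungDiagram) : Prop :=
  r ≤ k ∧ IsCore (k + 1) β ∧ IsCore (k + 1) γ ∧ IsHorizontalStrip β γ ∧
  pSize k γ = pSize k β + r ∧ (resSet k β γ).card = r

/-- An affine set-valued `r`-strip `(γ/β, ρ)` (for `0 ≤ r ≤ k`), with `(k+1)`-cores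
`ρ ⊆ β ⊆ γ`:  (asv1) `γ/ρ` is a horizontal strip; (asv2) `γ/β` is an affine `(r-m)`-strip
where `m = |Res(β/ρ)|`; (asv3) `β/ρ` consists of `β`-removable corners, and if a cell of
residue `i` lies in `β/ρ` then every `β`-removable `i`-corner that is not `γ`-blocked lies
in `β/ρ`. -/
def IsAffineSVStrip (k r : ℕ) (ρ β γ : YoungDiagram) : Prop :=
  r ≤ k ∧ IsCore (k + 1) ρ ∧ ρ ≤ β ∧
  IsHorizontalStrip ρ γ ∧
  (resSet k ρ β).card ≤ r ∧
  IsAffineStrip k (r - (resSet k ρ β).card) β γ ∧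
  (∀ c : ℕ × ℕ, c ∈ β → c ∉ ρ → Removable β c) ∧
  (∀ c : ℕ × ℕ, c ∈ β → c ∉ ρ → ∀ c' : ℕ × ℕ, Removable β c' →
    residue k c' = residue k c → ¬ Blocked γ c' → c' ∉ ρ)

/-- The finite set of addable corners of `γ` with residue `i`. -/
noncomputable def addableSet (k : ℕ) (i : ZMod (k + 1)) (γ : YoungDiagram) : Finset (ℕ × ℕ) :=
  ((Finset.range (γ.colLen 0 + 1)).image fun r => (r, γ.rowLen r)).filter
    fun c => Addable γ c ∧ residue k c = i

/-- The operator `𝔰_i`: add to `γ` all its addable corners of residue `i`. -/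
noncomputable def addCorners (k : ℕ) (i : ZMod (k + 1)) (γ : YoungDiagram) : YoungDiagram where
  cells := γ.cells ∪ addableSet k i γ
  isLowerSet := by
    intro a b hba ha
    simp only [Finset.coe_union, Set.mem_union, Finset.mem_coe] at ha ⊢
    rcases ha with ha | ha
    · exact Or.inl (γ.isLowerSet hba ha)
    · have haddable : Addable γ a := ((Finset.mem_filter.mp ha).2).1
      by_cases hab : b = a
      · exact Or.inr (hab ▸ ha)
      · exact Or.inl (haddable.2 b hba hab)

/-!
Record a diagram by its beads `rowLen s - s`, one per row. The hook length of a cell is the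
distance from the bead of its row down to the gap of its column, so `p`-cores are the diagrams
whose bead set is closed under `x ↦ x - p`, and `|𝔭(μ)|` counts bead–gap pairs at distance less
than `p`.

After transposing, each strip has at most one cell per row, so passing to the larger diagram moves
some beads one step right. Then `|𝔭|` gains one for each mover `x` with a fixed bead at
`x + 1 - p` and loses one for each mover `x` with a fixed bead at `x + p`. Movers of the first kind
are lowest elements of runs `x, x + p, …` of movers. Runs have as many lowest as highest elements,
and a highest element `x` is of the second kind unless `x + p` is not a bead, which, when the
smaller diagram is a core, happens at most once per residue class: `|𝔭(γ)| ≤ |𝔭(ρ)| + |Res(γ/ρ)|`.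
When the larger diagram is a core, every lowest element is of the first kind, and when moreover the
new cells are removable corners there are no movers of the second kind:
`|𝔭(ρ)| + |Res(β/ρ)| ≤ |𝔭(β)|`. Since `|𝔭(γ)| = |𝔭(β)| + r - |Res(β/ρ)|`, the union
`Res(γ/ρ) = Res(γ/β) ∪ Res(β/ρ)` has at least, hence exactly, `r` elements.
-/

/-! ## The abacus of a Young diagram -/

section Abacus

variable {μ : YoungDiagram}

def bead (μ : YoungDiagram) (s : ℕ) : ℤ := μ.rowLen s - s

def gap (μ : YoungDiagram) (c : ℕ) : ℤ := c + 1 - μ.colLen c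

def beads (μ : YoungDiagram) : Set ℤ := Set.range (bead μ)

theorem bead_strictAnti (μ : YoungDiagram) : StrictAnti (bead μ) := by
  intro s t hst
  have := μ.rowLen_anti s t hst.le
  simp only [bead]
  omega

theorem bead_injective (μ : YoungDiagram) : Function.Injective (bead μ) :=
  (bead_strictAnti μ).injective

theorem gap_strictMono (μ : YoungDiagram) : StrictMono (gap μ) := by
  intro c d hcd
  have := μ.colLen_anti c d hcd.le
  simp only [gap]
  omega

theorem gap_notMem_beads (μ : YoungDiagram) (c : ℕ) : gap μ c ∉ beads μ := by
  rintro ⟨s, hs⟩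
  simp only [bead, gap] at hs
  by_cases hsc : s < μ.colLen c
  · have := YoungDiagram.mem_iff_lt_rowLen.1 (YoungDiagram.mem_iff_lt_colLen.2 hsc)
    omega
  · have : μ.rowLen s ≤ c := by
      by_contra h
      exact hsc (YoungDiagram.mem_iff_lt_colLen.1 (YoungDiagram.mem_iff_lt_rowLen.2 (by omega)))
    omega

theorem hookLen_eq_bead_sub_gap {t c : ℕ} (h : (t, c) ∈ μ) :
    (hookLen μ t c : ℤ) = bead μ t - gap μ c := by
  have h₁ := YoungDiagram.mem_iff_lt_rowLen.1 h
  have h₂ := YoungDiagram.mem_iff_lt_colLen.1 h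
  simp only [hookLen, bead, gap]
  omega

theorem exists_gap_eq {t : ℕ} {x : ℤ} (hx : x ∉ beads μ) (hxt : x < bead μ t) :
    ∃ c, (t, c) ∈ μ ∧ gap μ c = x := by
  have hex : ∃ s, bead μ s < x := ⟨μ.rowLen 0 + (1 - x).toNat, by
    have := μ.rowLen_anti 0 (μ.rowLen 0 + (1 - x).toNat) (Nat.zero_le _)
    simp only [bead]
    omega⟩
  classical
  set s₀ := Nat.find hex
  have hs₀ : bead μ s₀ < x := Nat.find_spec hex
  have hlt : ∀ s < s₀, x < bead μ s := fun s hs =>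
    lt_of_le_of_ne (not_lt.1 (Nat.find_min hex hs)) fun h => hx ⟨s, h.symm⟩
  have ht : t < s₀ := (bead_strictAnti μ).lt_iff_gt.1 (hs₀.trans hxt)
  have hprev := hlt (s₀ - 1) (by omega)
  have hs₀bead : -(s₀ : ℤ) ≤ bead μ s₀ := by simp only [bead]; omega
  obtain ⟨c, hc⟩ : ∃ c : ℕ, (c : ℤ) = x + s₀ - 1 := ⟨(x + s₀ - 1).toNat, by omega⟩
  have hin : (s₀ - 1, c) ∈ μ := by
    rw [YoungDiagram.mem_iff_lt_rowLen]
    simp only [bead] at hprev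
    omega
  have hout : (s₀, c) ∉ μ := by
    rw [YoungDiagram.mem_iff_lt_rowLen]
    simp only [bead] at hs₀
    omega
  have hcol : μ.colLen c = s₀ := by
    rw [YoungDiagram.mem_iff_lt_colLen] at hin hout
    omega
  refine ⟨c, μ.up_left_mem (by omega) le_rfl hin, ?_⟩
  simp only [gap, hcol]
  omega

theorem IsCore.sub_mem_beads {p : ℕ} (hμ : IsCore p μ) {x : ℤ} (hx : x ∈ beads μ) :
    x - p ∈ beads μ := by
  rcases Nat.eq_zero_or_pos p with rfl | hp
  · simpa using hx
  by_contra hgap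
  obtain ⟨t, rfl⟩ := hx
  obtain ⟨c, hc, hgc⟩ := exists_gap_eq (t := t) hgap (by omega)
  have := hookLen_eq_bead_sub_gap hc
  exact hμ (t, c) hc (by dsimp only; omega)

end Abacus

section Windows

variable {μ : YoungDiagram}

theorem gap_lt_bead {t c : ℕ} (h : (t, c) ∈ μ) : gap μ c < bead μ t := by
  have h₁ := YoungDiagram.mem_iff_lt_rowLen.1 h
  have h₂ := YoungDiagram.mem_iff_lt_colLen.1 h
  simp only [bead, gap]
  omega

theorem pRow_eq_card_gaps (k : ℕ) (μ : YoungDiagram) (s : ℕ) :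
    pRow k μ s =
      ((Finset.Ioo (bead μ s - (k + 1)) (bead μ s)).filter fun x => x ∉ beads μ).card := by
  refine Finset.card_nbij (fun c => gap μ c.2) ?_ ?_ ?_
  · rintro ⟨t, c⟩ hc
    simp only [Finset.mem_coe, Finset.mem_filter, YoungDiagram.mem_cells] at hc
    obtain ⟨hc, rfl, hk⟩ := hc
    have := hookLen_eq_bead_sub_gap hc
    simp only [Finset.mem_coe, Finset.mem_filter, Finset.mem_Ioo]
    exact ⟨⟨by omega, gap_lt_bead hc⟩, gap_notMem_beads μ c⟩
  · rintro ⟨t, c⟩ hc ⟨t', c'⟩ hc' h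
    simp only [Finset.mem_coe, Finset.mem_filter, YoungDiagram.mem_cells] at hc hc'
    rw [Prod.ext_iff, hc.2.1, hc'.2.1]
    exact ⟨rfl, (gap_strictMono μ).injective h⟩
  · intro x hx
    simp only [Finset.mem_coe, Finset.mem_filter, Finset.mem_Ioo] at hx
    obtain ⟨c, hc, rfl⟩ := exists_gap_eq hx.2 hx.1.2
    have := hookLen_eq_bead_sub_gap hc
    refine ⟨(s, c), Finset.mem_filter.2 ⟨(YoungDiagram.mem_cells _).2 hc, rfl, ?_⟩, rfl⟩
    show hookLen μ s c ≤ k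
    omega

theorem card_beads_in_window (k : ℕ) (μ : YoungDiagram) {s M : ℕ} (hM : s + k + 1 ≤ M) :
    ((Finset.Ioo (bead μ s - (k + 1)) (bead μ s)).filter fun x => x ∈ beads μ).card =
      ((Finset.range M).filter fun t =>
        bead μ s - (k + 1) < bead μ t ∧ bead μ t < bead μ s).card := by
  symm
  refine Finset.card_nbij (bead μ) ?_ (bead_injective μ).injOn ?_
  · intro t ht
    simp only [Finset.mem_coe, Finset.mem_filter] at ht
    simp only [Finset.mem_coe, Finset.mem_filter, Finset.mem_Ioo]
    exact ⟨ht.2, t, rfl⟩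
  · intro x hx
    simp only [Finset.mem_coe, Finset.mem_filter, Finset.mem_Ioo] at hx
    obtain ⟨⟨hlo, hhi⟩, t, rfl⟩ := hx
    have hst : s < t := (bead_strictAnti μ).lt_iff_gt.1 hhi
    have := μ.rowLen_anti s t hst.le
    refine ⟨t, ?_, rfl⟩
    simp only [Finset.mem_coe, Finset.mem_filter, Finset.mem_range]
    refine ⟨?_, hlo, hhi⟩
    simp only [bead] at hlo
    omega

theorem pRow_add_card_window (k : ℕ) (μ : YoungDiagram) {s M : ℕ} (hM : s + k + 1 ≤ M) :
    pRow k μ s + ((Finset.range M).filter fun t =>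
        bead μ s - (k + 1) < bead μ t ∧ bead μ t < bead μ s).card = k := by
  rw [pRow_eq_card_gaps, ← card_beads_in_window k μ hM, add_comm,
    Finset.card_filter_add_card_filter_not, Int.card_Ioo]
  omega

theorem pSize_eq_sum_pRow (k : ℕ) (μ : YoungDiagram) {N : ℕ} (hN : μ.colLen 0 ≤ N) :
    pSize k μ = ∑ s ∈ Finset.range N, pRow k μ s := by
  rw [pSize, Finset.card_eq_sum_card_fiberwise (f := Prod.fst) (t := Finset.range N)]
  · refine Finset.sum_congr rfl fun s _ => ?_
    simp only [pRow, Finset.filter_filter]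
    congr 1
    ext c
    simp only [Finset.mem_filter]
    tauto
  · rintro ⟨t, c⟩ hc
    simp only [Finset.mem_coe, Finset.mem_filter, YoungDiagram.mem_cells] at hc
    have := YoungDiagram.mem_iff_lt_colLen.1 (μ.up_left_mem le_rfl (Nat.zero_le c) hc.1)
    exact Finset.mem_coe.2 (Finset.mem_range.2 (by omega))

def nearPairs (p : ℕ) (μ : YoungDiagram) (N M : ℕ) : Finset (ℕ × ℕ) :=
  (Finset.range N ×ˢ Finset.range M).filter fun q =>
    bead μ q.1 - p < bead μ q.2 ∧ bead μ q.2 < bead μ q.1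

theorem pSize_add_card_nearPairs (k : ℕ) (μ : YoungDiagram) {N M : ℕ} (hN : μ.colLen 0 ≤ N)
    (hM : N + k ≤ M) : pSize k μ + (nearPairs (k + 1) μ N M).card = N * k := by
  rw [pSize_eq_sum_pRow k μ hN, nearPairs, Finset.card_filter, Finset.sum_product,
    ← Finset.sum_add_distrib]
  calc _ = ∑ _s ∈ Finset.range N, k := Finset.sum_congr rfl fun s hs => by
        rw [← Finset.card_filter]
        push_cast
        exact pRow_add_card_window k μ (by rw [Finset.mem_range] at hs; omega)
    _ = N * k := by rw [Finset.sum_const, Finset.card_range, smul_eq_mul]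

end Windows

/-! ## Runs of step `n` in a finite set of integers -/

section Runs

theorem mem_of_le_of_modEq {n : ℕ} {B : Set ℤ} (hB : ∀ x ∈ B, x - n ∈ B) {x y : ℤ}
    (hx : x ∈ B) (hyx : y ≤ x) (hxy : y ≡ x [ZMOD n]) : y ∈ B := by
  obtain ⟨m, hm⟩ := hxy.dvd
  have hsteps : ∀ j : ℕ, x - n * j ∈ B := by
    intro j
    induction j with
    | zero => simpa using hx
    | succ j ih => simpa [mul_add, sub_add_eq_sub_sub] using hB _ ih
  rcases Nat.eq_zero_or_pos n with rfl | hn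
  · rwa [show y = x by simp at hm; omega]
  have hm₀ : 0 ≤ m := by
    by_contra h
    have := mul_neg_of_pos_of_neg (Int.natCast_pos.2 hn) (not_le.1 h)
    omega
  simpa [Int.toNat_of_nonneg hm₀, ← hm] using hsteps m.toNat

theorem card_filter_sub_notMem_eq {α : Type*} [AddGroup α] [DecidableEq α] (T : Finset α)
    (a : α) : (T.filter fun x => x - a ∉ T).card = (T.filter fun x => x + a ∉ T).card := by
  have h : (T.filter fun x => x - a ∈ T).card = (T.filter fun x => x + a ∈ T).card := by
    refine Finset.card_nbij' (· - a) (· + a) ?_ ?_ ?_ ?_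
    · intro x hx
      simp only [Finset.mem_coe, Finset.mem_filter, sub_add_cancel] at hx ⊢
      exact ⟨hx.2, hx.1⟩
    · intro x hx
      simp only [Finset.mem_coe, Finset.mem_filter, add_sub_cancel_right] at hx ⊢
      exact ⟨hx.2, hx.1⟩
    · intro x _
      simp
    · intro x _
      simp
  have h₁ := T.card_filter_add_card_filter_not fun x => x - a ∈ T
  have h₂ := T.card_filter_add_card_filter_not fun x => x + a ∈ T
  omega

theorem card_image_intCast_le_card_filter_sub_notMem {n : ℕ} (hn : n ≠ 0) (T : Finset ℤ) :
    (T.image (Int.cast : ℤ → ZMod n)).card ≤ (T.filter fun x : ℤ => x - n ∉ T).card := by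
  refine le_trans (Finset.card_le_card fun i hi => ?_)
    (Finset.card_image_le (s := T.filter fun x : ℤ => x - n ∉ T) (f := Int.cast))
  obtain ⟨x, hx, rfl⟩ := Finset.mem_image.1 hi
  set C := T.filter fun y => y ≡ x [ZMOD n]
  have hC : C.Nonempty := ⟨x, Finset.mem_filter.2 ⟨hx, Int.ModEq.refl x⟩⟩
  obtain ⟨hmT, hmx⟩ := Finset.mem_filter.1 (C.min'_mem hC)
  refine Finset.mem_image.2 ⟨C.min' hC, Finset.mem_filter.2 ⟨hmT, fun hsub => ?_⟩,
    (ZMod.intCast_eq_intCast_iff _ _ _).2 hmx⟩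
  have hsubx : C.min' hC - n ≡ x [ZMOD n] :=
    (Int.modEq_sub_modulus_iff.2 (Int.ModEq.refl _)).symm.trans hmx
  have hle := C.min'_le _ (Finset.mem_filter.2 ⟨hsub, hsubx⟩)
  omega

/-- Within a set closed under subtracting `n`, the elements `x` of `T` with `x + n` outside the
set are pairwise incongruent modulo `n`. -/
theorem card_filter_add_notMem_le_card_image_intCast {n : ℕ} {B : Set ℤ}
    (hB : ∀ x ∈ B, x - n ∈ B) (T : Finset ℤ) (hT : ∀ x ∈ T, x ∈ B) :
    (T.filter fun x : ℤ => x + n ∉ B).card ≤ (T.image (Int.cast : ℤ → ZMod n)).card := by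
  have key : ∀ x ∈ T.filter (fun x : ℤ => x + n ∉ B), ∀ y ∈ T,
      (x : ZMod n) = (y : ZMod n) → x ≤ y → x = y := by
    intro x hx y hy hxy hle
    obtain ⟨-, hxn⟩ := Finset.mem_filter.1 hx
    have hmod := (ZMod.intCast_eq_intCast_iff _ _ _).1 hxy
    by_contra hne
    have hdvd : (n : ℤ) ≤ y - x := Int.le_of_dvd (by omega) hmod.dvd
    exact hxn (mem_of_le_of_modEq hB (hT y hy) (by omega) (Int.add_modEq_right.trans hmod))
  refine Finset.card_le_card_of_injOn Int.cast (fun x hx => ?_) fun x hx y hy hxy => ?_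
  · exact Finset.mem_image_of_mem _ (Finset.mem_filter.1 hx).1
  · rcases le_total x y with h | h
    · exact key x hx y (Finset.mem_filter.1 hy).1 hxy h
    · exact (key y hy x (Finset.mem_filter.1 hx).1 hxy.symm h).symm

theorem card_filter_sub_notMem_le {n : ℕ} {B : Set ℤ} (hB : ∀ x ∈ B, x - n ∈ B)
    (T : Finset ℤ) (hT : ∀ x ∈ T, x ∈ B) :
    (T.filter fun x : ℤ => x - n ∉ T).card ≤
      (T.filter fun x : ℤ => x + n ∈ B ∧ x + n ∉ T).card +
        (T.image (Int.cast : ℤ → ZMod n)).card := by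
  rw [card_filter_sub_notMem_eq]
  refine (Finset.card_le_card fun x hx => ?_).trans ((Finset.card_union_le _ _).trans
    (Nat.add_le_add_left (card_filter_add_notMem_le_card_image_intCast hB T hT) _))
  obtain ⟨hxT, hx⟩ := Finset.mem_filter.1 hx
  by_cases hxB : x + n ∈ B
  · exact Finset.mem_union_left _ (Finset.mem_filter.2 ⟨hxT, hxB, hx⟩)
  · exact Finset.mem_union_right _ (Finset.mem_filter.2 ⟨hxT, hxB⟩)

end Runs

/-! ## Vertical strips -/

section VerticalStrip

def IsVerticalStrip (ρ γ : YoungDiagram) : Prop :=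
  ρ ≤ γ ∧ ∀ s, γ.rowLen s ≤ ρ.rowLen s + 1

def stripRows (ρ γ : YoungDiagram) : Finset ℕ :=
  (Finset.range (γ.colLen 0)).filter fun s => ρ.rowLen s < γ.rowLen s

/-- The beads of `ρ` that move one step to the right in `γ`. -/
def movers (ρ γ : YoungDiagram) : Finset ℤ :=
  (stripRows ρ γ).image (bead ρ)

/-- Movers whose distance to a fixed bead below them grows from `p - 1` to `p`. -/
noncomputable def stretched (p : ℕ) (ρ γ : YoungDiagram) : Finset ℤ :=
  (movers ρ γ).filter fun x => x + 1 - p ∈ beads ρ ∧ x + 1 - p ∉ movers ρ γ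

/-- Movers whose distance to a fixed bead above them shrinks from `p` to `p - 1`. -/
noncomputable def squeezed (p : ℕ) (ρ γ : YoungDiagram) : Finset ℤ :=
  (movers ρ γ).filter fun x => x + p ∈ beads ρ ∧ x + p ∉ movers ρ γ

variable {ρ γ : YoungDiagram}

theorem rowLen_le_rowLen (hle : ρ ≤ γ) (s : ℕ) : ρ.rowLen s ≤ γ.rowLen s := by
  by_contra h
  have := YoungDiagram.mem_iff_lt_rowLen.1 (hle (YoungDiagram.mem_iff_lt_rowLen.2 (not_le.1 h)))
  omega

theorem mem_stripRows {s : ℕ} : s ∈ stripRows ρ γ ↔ ρ.rowLen s < γ.rowLen s := by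
  simp only [stripRows, Finset.mem_filter, Finset.mem_range, and_iff_right_iff_imp]
  intro h
  exact YoungDiagram.mem_iff_lt_colLen.1 (YoungDiagram.mem_iff_lt_rowLen.2 (by omega))

theorem bead_mem_movers {s : ℕ} : bead ρ s ∈ movers ρ γ ↔ s ∈ stripRows ρ γ :=
  (bead_injective ρ).mem_finset_image

theorem mem_beads_of_mem_movers {x : ℤ} (hx : x ∈ movers ρ γ) : x ∈ beads ρ := by
  obtain ⟨s, -, rfl⟩ := Finset.mem_image.1 hx
  exact ⟨s, rfl⟩

theorem IsVerticalStrip.bead_of_mem_stripRows (hv : IsVerticalStrip ρ γ) {s : ℕ}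
    (hs : s ∈ stripRows ρ γ) : bead γ s = bead ρ s + 1 := by
  have := hv.2 s
  rw [mem_stripRows] at hs
  simp only [bead]
  omega

theorem bead_of_notMem_stripRows (hle : ρ ≤ γ) {s : ℕ} (hs : s ∉ stripRows ρ γ) :
    bead γ s = bead ρ s := by
  have := rowLen_le_rowLen hle s
  rw [mem_stripRows] at hs
  simp only [bead]
  omega

theorem IsVerticalStrip.bead_eq (hv : IsVerticalStrip ρ γ) (s : ℕ) :
    bead γ s = bead ρ s + if s ∈ stripRows ρ γ then 1 else 0 := by
  split_ifs with hs
  · exact hv.bead_of_mem_stripRows hs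
  · rw [bead_of_notMem_stripRows hv.1 hs, add_zero]

theorem IsVerticalStrip.resSet_eq (hv : IsVerticalStrip ρ γ) (k : ℕ) :
    resSet k ρ γ = (movers ρ γ).image Int.cast := by
  ext i
  simp only [resSet, movers, Finset.image_image, Finset.mem_image, Finset.mem_sdiff,
    YoungDiagram.mem_cells, Prod.exists]
  constructor
  · rintro ⟨s, c, ⟨hγ, hρ⟩, rfl⟩
    rw [YoungDiagram.mem_iff_lt_rowLen] at hγ hρ
    have hc : c = ρ.rowLen s := by have := hv.2 s; omega
    refine ⟨s, mem_stripRows.2 (by omega), ?_⟩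
    simp [residue, bead, hc]
  · rintro ⟨s, hs, rfl⟩
    rw [mem_stripRows] at hs
    refine ⟨s, ρ.rowLen s, ⟨YoungDiagram.mem_iff_lt_rowLen.2 hs,
      fun h => (YoungDiagram.mem_iff_lt_rowLen.1 h).false⟩, ?_⟩
    simp [residue, bead]

theorem IsVerticalStrip.stretched_subset (hv : IsVerticalStrip ρ γ) (p : ℕ) :
    stretched p ρ γ ⊆ (movers ρ γ).filter fun x : ℤ => x - p ∉ movers ρ γ := by
  intro x hx
  obtain ⟨hxT, ⟨t, ht⟩, htT⟩ := Finset.mem_filter.1 hx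
  refine Finset.mem_filter.2 ⟨hxT, fun hsub => ?_⟩
  obtain ⟨u, hu, hux⟩ := Finset.mem_image.1 hsub
  rw [← ht, bead_mem_movers] at htT
  have : bead γ u = bead γ t := by
    rw [hv.bead_of_mem_stripRows hu, bead_of_notMem_stripRows hv.1 htT]
    omega
  exact htT (bead_injective γ this ▸ hu)

theorem IsVerticalStrip.filter_subset_stretched (hv : IsVerticalStrip ρ γ) {p : ℕ}
    (hγ : IsCore p γ) :
    (movers ρ γ).filter (fun x : ℤ => x - p ∉ movers ρ γ) ⊆ stretched p ρ γ := by
  intro x hx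
  obtain ⟨hxT, hsub⟩ := Finset.mem_filter.1 hx
  obtain ⟨s, hs, rfl⟩ := Finset.mem_image.1 hxT
  obtain ⟨t, ht⟩ := hγ.sub_mem_beads ⟨s, rfl⟩
  rw [hv.bead_of_mem_stripRows hs] at ht
  have htS : t ∉ stripRows ρ γ := fun htS => hsub <| by
    rw [hv.bead_of_mem_stripRows htS] at ht
    rw [show bead ρ s - p = bead ρ t by omega]
    exact bead_mem_movers.2 htS
  rw [bead_of_notMem_stripRows hv.1 htS] at ht
  refine Finset.mem_filter.2 ⟨hxT, ⟨t, by omega⟩, ?_⟩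
  rw [← ht, bead_mem_movers]
  exact htS

theorem IsVerticalStrip.squeezed_eq_empty (hv : IsVerticalStrip ρ γ) {p : ℕ} (hγ : IsCore p γ)
    (hrem : ∀ c, c ∈ γ → c ∉ ρ → Removable γ c) : squeezed p ρ γ = ∅ := by
  refine Finset.eq_empty_of_forall_notMem fun y hy => ?_
  obtain ⟨hyT, ⟨s, hs⟩, hsT⟩ := Finset.mem_filter.1 hy
  obtain ⟨t, ht, rfl⟩ := Finset.mem_image.1 hyT
  rw [← hs, bead_mem_movers] at hsT
  obtain ⟨u, hu⟩ := hγ.sub_mem_beads ⟨s, rfl⟩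
  rw [bead_of_notMem_stripRows hv.1 hsT, hs, add_sub_cancel_right] at hu
  -- the bead of `u` sits just left of the bead of `t` in `γ`, so `u = t + 1` and
  -- the new cell of row `t` has a cell of `γ` above it
  have hγt := hv.bead_of_mem_stripRows ht
  have htu : t < u := (bead_strictAnti γ).lt_iff_gt.1 (by omega)
  have hlen := γ.rowLen_anti t u htu.le
  have hvt := hv.2 t
  rw [mem_stripRows] at ht
  simp only [bead] at hu hγt
  obtain rfl : u = t + 1 := by omega
  refine (hrem _ (YoungDiagram.mem_iff_lt_rowLen.2 ht)
    fun h => (YoungDiagram.mem_iff_lt_rowLen.1 h).false).2.1 ?_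
  exact YoungDiagram.mem_iff_lt_rowLen.2 (by dsimp only; omega)

end VerticalStrip

section Delta

variable {ρ γ : YoungDiagram}

noncomputable def stretchPairs (p : ℕ) (ρ γ : YoungDiagram) (N M : ℕ) : Finset (ℕ × ℕ) :=
  (Finset.range N ×ˢ Finset.range M).filter fun q =>
    q.1 ∈ stripRows ρ γ ∧ q.2 ∉ stripRows ρ γ ∧ bead ρ q.2 = bead ρ q.1 + 1 - p

noncomputable def squeezePairs (p : ℕ) (ρ γ : YoungDiagram) (N M : ℕ) : Finset (ℕ × ℕ) :=
  (Finset.range N ×ˢ Finset.range M).filter fun q =>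
    q.1 ∉ stripRows ρ γ ∧ q.2 ∈ stripRows ρ γ ∧ bead ρ q.1 = bead ρ q.2 + p

/-- Only the pairs of a moving and a fixed bead at distance `p - 1` or `p` enter or leave the
near pairs. -/
theorem IsVerticalStrip.card_nearPairs_add_card_stretchPairs (hv : IsVerticalStrip ρ γ)
    (p N M : ℕ) :
    (nearPairs p γ N M).card + (stretchPairs p ρ γ N M).card =
      (nearPairs p ρ N M).card + (squeezePairs p ρ γ N M).card := by
  simp only [nearPairs, stretchPairs, squeezePairs, Finset.card_filter,
    ← Finset.sum_add_distrib]
  refine Finset.sum_congr rfl fun ⟨s, t⟩ _ => ?_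
  by_cases hst : s = t
  · subst hst
    by_cases hs : s ∈ stripRows ρ γ <;> simp [hs]
  have hρ := (bead_injective ρ).ne hst
  have hγ := (bead_injective γ).ne hst
  rw [hv.bead_eq, hv.bead_eq] at hγ
  simp only [hv.bead_eq]
  by_cases hs : s ∈ stripRows ρ γ <;> by_cases ht : t ∈ stripRows ρ γ <;>
    simp only [hs, ht, if_true, if_false, true_and, false_and, not_true_eq_false,
      not_false_eq_true] at hγ ⊢ <;>
    split_ifs <;> omega

theorem card_stretchPairs {p N M : ℕ} (hN : γ.colLen 0 ≤ N) (hM : N + p ≤ M) :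
    (stretchPairs p ρ γ N M).card = (stretched p ρ γ).card := by
  refine Finset.card_nbij (fun q => bead ρ q.1) ?_ ?_ ?_
  · rintro ⟨s, t⟩ hq
    obtain ⟨-, hs, ht, hst⟩ := Finset.mem_filter.1 hq
    refine Finset.mem_filter.2 ⟨bead_mem_movers.2 hs, ⟨t, hst⟩, ?_⟩
    rwa [← hst, bead_mem_movers]
  · rintro ⟨s, t⟩ hq ⟨s', t'⟩ hq' h
    obtain rfl := bead_injective ρ h
    obtain rfl := bead_injective ρ
      ((Finset.mem_filter.1 hq).2.2.2.trans (Finset.mem_filter.1 hq').2.2.2.symm)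
    rfl
  · intro x hx
    obtain ⟨hxT, ⟨t, ht⟩, htT⟩ := Finset.mem_filter.1 hx
    obtain ⟨s, hs, rfl⟩ := Finset.mem_image.1 hxT
    rw [← ht, bead_mem_movers] at htT
    have hsN : s < N := (Finset.mem_range.1 (Finset.mem_filter.1 hs).1).trans_le hN
    have htM : t < M := by
      rcases le_total t s with h | h
      · omega
      · have := ρ.rowLen_anti s t h
        simp only [bead] at ht
        omega
    exact ⟨(s, t), Finset.mem_filter.2 ⟨Finset.mem_product.2
      ⟨Finset.mem_range.2 hsN, Finset.mem_range.2 htM⟩, hs, htT, ht⟩, rfl⟩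

theorem card_squeezePairs {p N M : ℕ} (hN : γ.colLen 0 ≤ N) (hM : N ≤ M) :
    (squeezePairs p ρ γ N M).card = (squeezed p ρ γ).card := by
  refine Finset.card_nbij (fun q => bead ρ q.2) ?_ ?_ ?_
  · rintro ⟨s, t⟩ hq
    obtain ⟨-, hs, ht, hst⟩ := Finset.mem_filter.1 hq
    refine Finset.mem_filter.2 ⟨bead_mem_movers.2 ht, ⟨s, hst⟩, ?_⟩
    rwa [← hst, bead_mem_movers]
  · rintro ⟨s, t⟩ hq ⟨s', t'⟩ hq' h
    obtain rfl := bead_injective ρ h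
    obtain rfl := bead_injective ρ
      ((Finset.mem_filter.1 hq).2.2.2.trans (Finset.mem_filter.1 hq').2.2.2.symm)
    rfl
  · intro y hy
    obtain ⟨hyT, ⟨s, hs⟩, hsT⟩ := Finset.mem_filter.1 hy
    obtain ⟨t, ht, rfl⟩ := Finset.mem_image.1 hyT
    rw [← hs, bead_mem_movers] at hsT
    have htN : t < N := (Finset.mem_range.1 (Finset.mem_filter.1 ht).1).trans_le hN
    have hst : s ≤ t := (bead_strictAnti ρ).le_iff_ge.1 (by omega)
    exact ⟨(s, t), Finset.mem_filter.2 ⟨Finset.mem_product.2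
      ⟨Finset.mem_range.2 (by omega), Finset.mem_range.2 (by omega)⟩, hsT, ht, hs⟩, rfl⟩

theorem IsVerticalStrip.pSize_add_card_squeezed (hv : IsVerticalStrip ρ γ) (k : ℕ) :
    pSize k γ + (squeezed (k + 1) ρ γ).card = pSize k ρ + (stretched (k + 1) ρ γ).card := by
  have hρN : ρ.colLen 0 ≤ γ.colLen 0 := by
    simpa only [YoungDiagram.rowLen_transpose] using
      rowLen_le_rowLen (YoungDiagram.transpose_mono hv.1) 0
  have hγ := pSize_add_card_nearPairs k γ (M := γ.colLen 0 + k + 1) le_rfl (by omega)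
  have hρ := pSize_add_card_nearPairs k ρ (M := γ.colLen 0 + k + 1) hρN (by omega)
  have hpairs := hv.card_nearPairs_add_card_stretchPairs (k + 1) (γ.colLen 0) (γ.colLen 0 + k + 1)
  rw [card_stretchPairs le_rfl (by omega), card_squeezePairs le_rfl (by omega)] at hpairs
  omega

end Delta

section Inequalities

variable {k : ℕ} {ρ γ : YoungDiagram}

theorem IsVerticalStrip.pSize_le (hv : IsVerticalStrip ρ γ) (hρ : IsCore (k + 1) ρ) :
    pSize k γ ≤ pSize k ρ + (resSet k ρ γ).card := by
  have hdelta := hv.pSize_add_card_squeezed k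
  have hbottoms := Finset.card_le_card (hv.stretched_subset (k + 1))
  have hruns : _ ≤ (squeezed (k + 1) ρ γ).card + _ :=
    card_filter_sub_notMem_le (fun x hx => hρ.sub_mem_beads hx) _ fun _ => mem_beads_of_mem_movers
  rw [hv.resSet_eq]
  omega

theorem IsVerticalStrip.of_removable (hle : ρ ≤ γ)
    (hrem : ∀ c : ℕ × ℕ, c ∈ γ → c ∉ ρ → Removable γ c) : IsVerticalStrip ρ γ := by
  refine ⟨hle, fun s => not_lt.1 fun hs => ?_⟩
  have hc : (s, ρ.rowLen s) ∈ γ := YoungDiagram.mem_iff_lt_rowLen.2 (by omega)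
  refine (hrem _ hc fun h => (YoungDiagram.mem_iff_lt_rowLen.1 h).false).2.2 ?_
  exact YoungDiagram.mem_iff_lt_rowLen.2 (by dsimp only; omega)

theorem pSize_add_card_resSet_le (hγ : IsCore (k + 1) γ) (hle : ρ ≤ γ)
    (hrem : ∀ c : ℕ × ℕ, c ∈ γ → c ∉ ρ → Removable γ c) :
    pSize k ρ + (resSet k ρ γ).card ≤ pSize k γ := by
  have hv := IsVerticalStrip.of_removable hle hrem
  have hdelta := hv.pSize_add_card_squeezed k
  rw [hv.squeezed_eq_empty hγ hrem, Finset.card_empty, add_zero] at hdelta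
  have hbottoms :=
    card_image_intCast_le_card_filter_sub_notMem (Nat.add_one_ne_zero k) (movers ρ γ)
  have hstretched := Finset.card_le_card (hv.filter_subset_stretched hγ)
  rw [hv.resSet_eq]
  omega

end Inequalities

/-! ## Transposition -/

section Transpose

variable {ρ γ μ : YoungDiagram}

theorem hookLen_transpose (μ : YoungDiagram) (a b : ℕ) :
    hookLen μ.transpose a b = hookLen μ b a := by
  rw [hookLen, hookLen, YoungDiagram.rowLen_transpose, YoungDiagram.colLen_transpose,
    Nat.add_comm]

theorem IsCore.transpose {p : ℕ} (h : IsCore p μ) : IsCore p μ.transpose := fun c hc => by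
  rw [hookLen_transpose]
  exact h c.swap (YoungDiagram.mem_transpose.1 hc)

theorem pSize_transpose (k : ℕ) (μ : YoungDiagram) : pSize k μ.transpose = pSize k μ := by
  refine Finset.card_nbij' Prod.swap Prod.swap ?_ ?_ (fun c _ => c.swap_swap)
    (fun c _ => c.swap_swap)
  all_goals
    intro c hc
    simp only [Finset.mem_coe, Finset.mem_filter, YoungDiagram.mem_cells,
      YoungDiagram.mem_transpose, hookLen_transpose, Prod.fst_swap, Prod.snd_swap,
      Prod.swap_swap] at hc ⊢
    exact hc

theorem card_resSet_transpose (k : ℕ) (ρ γ : YoungDiagram) :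
    (resSet k ρ.transpose γ.transpose).card = (resSet k ρ γ).card := by
  have h : resSet k ρ.transpose γ.transpose = (resSet k ρ γ).image Neg.neg := by
    ext i
    simp only [resSet, Finset.mem_image, Finset.mem_sdiff, YoungDiagram.mem_cells,
      YoungDiagram.mem_transpose, exists_exists_and_eq_and]
    constructor
    · rintro ⟨c, hc, rfl⟩
      exact ⟨c.swap, hc, by simp [residue]⟩
    · rintro ⟨c, hc, rfl⟩
      exact ⟨c.swap, by simpa using hc, by simp [residue]⟩
  rw [h, Finset.card_image_of_injective _ neg_injective]

theorem IsHorizontalStrip.isVerticalStrip_transpose (h : IsHorizontalStrip ρ γ) :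
    IsVerticalStrip ρ.transpose γ.transpose := by
  refine ⟨YoungDiagram.transpose_mono h.1, fun s => not_lt.1 fun hs => ?_⟩
  rw [YoungDiagram.rowLen_transpose, YoungDiagram.rowLen_transpose] at hs
  have hout : ∀ i, ρ.colLen s ≤ i → (i, s) ∉ ρ := fun i hi hm =>
    (YoungDiagram.mem_iff_lt_colLen.1 hm).not_ge hi
  have := h.2 (ρ.colLen s, s) (ρ.colLen s + 1, s)
    (YoungDiagram.mem_iff_lt_colLen.2 (by omega)) (hout _ le_rfl)
    (YoungDiagram.mem_iff_lt_colLen.2 (by omega)) (hout _ (by omega)) rfl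
  simp at this

theorem pSize_le_of_isHorizontalStrip {k : ℕ} (hρ : IsCore (k + 1) ρ)
    (h : IsHorizontalStrip ρ γ) : pSize k γ ≤ pSize k ρ + (resSet k ρ γ).card := by
  simpa only [pSize_transpose, card_resSet_transpose] using
    h.isVerticalStrip_transpose.pSize_le hρ.transpose

end Transpose

theorem resSet_eq_union {k : ℕ} {ρ β γ : YoungDiagram} (hρβ : ρ ≤ β) (hβγ : β ≤ γ) :
    resSet k ρ γ = resSet k β γ ∪ resSet k ρ β := by
  rw [resSet, resSet, resSet, ← Finset.image_union, Finset.sdiff_union_sdiff_cancel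
    (YoungDiagram.cells_subset_iff.2 hβγ) (YoungDiagram.cells_subset_iff.2 hρβ)]

theorem resSet_disjoint_of_affineSVStrip_general
    (k : ℕ) (r : ℕ) (ρ β γ : YoungDiagram)
    (h : IsAffineSVStrip k r ρ β γ) :
    Disjoint (resSet k β γ) (resSet k ρ β) ∧ (resSet k ρ γ).card = r := by
  obtain ⟨-, hρ, hρβ, hργ, hm, ⟨-, hβ, -, hβγ, hsize, hcard⟩, hrem, -⟩ := h
  have hA := pSize_le_of_isHorizontalStrip hρ hργ
  have hB := pSize_add_card_resSet_le hβ hρβ hrem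
  have hunion := Finset.card_union_add_card_inter (resSet k β γ) (resSet k ρ β)
  rw [← resSet_eq_union hρβ hβγ.1] at hunion
  have hinter : (resSet k β γ ∩ resSet k ρ β).card = 0 := by omega
  exact ⟨Finset.disjoint_iff_inter_eq_empty.2 (Finset.card_eq_zero.1 hinter), by omega⟩

/-- For any affine set-valued `r`-strip `(γ/β, ρ)`, the residue sets
`Res(γ/β)` and `Res(β/ρ)` are disjoint; consequently the cells of `γ/ρ` occupy exactly `r`
distinct residues. -/
theorem resSet_disjoint_of_affineSVStrip
    (k : ℕ) (hk : 1 ≤ k) (r : ℕ) (ρ β γ : YoungDiagram)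
    (h : IsAffineSVStrip k r ρ β γ) :
    Disjoint (resSet k β γ) (resSet k ρ β) ∧ (resSet k ρ γ).card = r :=
  resSet_disjoint_of_affineSVStrip_general k r ρ β γ h

end AffineKTheory
end
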